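/- Let C, D, θ be real constants with C ≠ 0 and D < 0, and set ε = √(−8D). A triple (T, l, σ) of smooth functions ℝ → ℝ belongs to Sol(C,D,θ) if and only if l = 0 and there exist real constants C₁, C₂, C₃, C₄ such that for all t ∈ ℝ: T(t) = (C₁/ε)·sin(εt) − (C₂/ε)·cos(εt) + C₃ and σ(t) = (θ²C₁/4)·cos(εt) + (θ²C₂/4)·sin(εt) + C₄. -/

import Mathlib

open Real

private lemma one_le_inf' : ((⊤ : ℕ∞) : WithTop ℕ∞) ≠ 0 :=
  ne_of_gt (lt_of_lt_of_le zero_lt_one (by exact_mod_cast le_top))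

private lemma deriv_fun_add' {f g : ℝ → ℝ} (hf : Differentiable ℝ f)
    (hg : Differentiable ℝ g) : deriv (f + g) = deriv f + deriv g :=
  funext fun t => deriv_add (hf t) (hg t)

private lemma deriv_fun_smul' (c : ℝ) {f : ℝ → ℝ} (hf : Differentiable ℝ f) :
    deriv (c • f) = c • deriv f :=
  funext fun t => deriv_const_smul c (hf t)

private lemma smooth_deriv' {f : ℝ → ℝ} (hf : ContDiff ℝ (⊤ : ℕ∞) f) :
    ContDiff ℝ (⊤ : ℕ∞) (deriv f) :=
  (contDiff_infty_iff_deriv.mp hf).2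

/-- The space of triples `(T, l, σ)` of smooth functions satisfying the isovector
system `C·l = 0`, `l″ = 2D·l`, `σ′ = (θ²/4)·T″`, `T‴ = 8D·T′`. -/
def Sol (C D θ : ℝ) : Submodule ℝ ((ℝ → ℝ) × (ℝ → ℝ) × (ℝ → ℝ)) where
  carrier := {p | ContDiff ℝ (⊤ : ℕ∞) p.1 ∧ ContDiff ℝ (⊤ : ℕ∞) p.2.1 ∧
    ContDiff ℝ (⊤ : ℕ∞) p.2.2 ∧
    (∀ t, C * p.2.1 t = 0) ∧
    (∀ t, deriv (deriv p.2.1) t = 2 * D * p.2.1 t) ∧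
    (∀ t, deriv p.2.2 t = θ ^ 2 / 4 * deriv (deriv p.1) t) ∧
    (∀ t, deriv (deriv (deriv p.1)) t = 8 * D * deriv p.1 t)}
  zero_mem' := by
    have h0 : deriv (0 : ℝ → ℝ) = 0 := funext fun x => deriv_const x 0
    refine ⟨contDiff_const, contDiff_const, contDiff_const, ?_, ?_, ?_, ?_⟩ <;>
      intro t <;> simp [h0]
  add_mem' := by
    rintro ⟨T₁, l₁, σ₁⟩ ⟨T₂, l₂, σ₂⟩ ⟨hT₁, hl₁, hσ₁, e₁, e₂, e₃, e₄⟩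
      ⟨hT₂, hl₂, hσ₂, f₁, f₂, f₃, f₄⟩
    have dT₁ : Differentiable ℝ T₁ := hT₁.differentiable one_le_inf'
    have dT₂ : Differentiable ℝ T₂ := hT₂.differentiable one_le_inf'
    have dl₁ : Differentiable ℝ l₁ := hl₁.differentiable one_le_inf'
    have dl₂ : Differentiable ℝ l₂ := hl₂.differentiable one_le_inf'
    have dσ₁ : Differentiable ℝ σ₁ := hσ₁.differentiable one_le_inf'
    have dσ₂ : Differentiable ℝ σ₂ := hσ₂.differentiable one_le_inf'
    have ddl₁ : Differentiable ℝ (deriv l₁) := (smooth_deriv' hl₁).differentiable one_le_inf'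
    have ddl₂ : Differentiable ℝ (deriv l₂) := (smooth_deriv' hl₂).differentiable one_le_inf'
    have ddT₁ : Differentiable ℝ (deriv T₁) := (smooth_deriv' hT₁).differentiable one_le_inf'
    have ddT₂ : Differentiable ℝ (deriv T₂) := (smooth_deriv' hT₂).differentiable one_le_inf'
    have dddT₁ : Differentiable ℝ (deriv (deriv T₁)) :=
      (smooth_deriv' (smooth_deriv' hT₁)).differentiable one_le_inf'
    have dddT₂ : Differentiable ℝ (deriv (deriv T₂)) :=
      (smooth_deriv' (smooth_deriv' hT₂)).differentiable one_le_inf'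
    have hl : deriv (deriv (l₁ + l₂)) = deriv (deriv l₁) + deriv (deriv l₂) := by
      rw [deriv_fun_add' dl₁ dl₂, deriv_fun_add' ddl₁ ddl₂]
    have hT2 : deriv (deriv (T₁ + T₂)) = deriv (deriv T₁) + deriv (deriv T₂) := by
      rw [deriv_fun_add' dT₁ dT₂, deriv_fun_add' ddT₁ ddT₂]
    have hT3 : deriv (deriv (deriv (T₁ + T₂)))
        = deriv (deriv (deriv T₁)) + deriv (deriv (deriv T₂)) := by
      rw [hT2, deriv_fun_add' dddT₁ dddT₂]
    refine ⟨hT₁.add hT₂, hl₁.add hl₂, hσ₁.add hσ₂, ?_, ?_, ?_, ?_⟩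
    · intro t
      simp only [Prod.mk_add_mk, Pi.add_apply, mul_add, e₁ t, f₁ t, add_zero]
    · intro t
      simp only [Prod.mk_add_mk]
      rw [hl]
      simp only [Pi.add_apply, e₂ t, f₂ t]; ring
    · intro t
      simp only [Prod.mk_add_mk]
      rw [hT2, deriv_fun_add' dσ₁ dσ₂]
      simp only [Pi.add_apply, e₃ t, f₃ t]; ring
    · intro t
      simp only [Prod.mk_add_mk]
      rw [hT3, deriv_fun_add' dT₁ dT₂]
      simp only [Pi.add_apply, e₄ t, f₄ t]; ring
  smul_mem' := by
    rintro c ⟨T, l, σ⟩ ⟨hT, hl, hσ, e₁, e₂, e₃, e₄⟩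
    have dT : Differentiable ℝ T := hT.differentiable one_le_inf'
    have dl : Differentiable ℝ l := hl.differentiable one_le_inf'
    have dσ : Differentiable ℝ σ := hσ.differentiable one_le_inf'
    have ddl : Differentiable ℝ (deriv l) := (smooth_deriv' hl).differentiable one_le_inf'
    have ddT : Differentiable ℝ (deriv T) := (smooth_deriv' hT).differentiable one_le_inf'
    have dddT : Differentiable ℝ (deriv (deriv T)) :=
      (smooth_deriv' (smooth_deriv' hT)).differentiable one_le_inf'
    have hl2 : deriv (deriv (c • l)) = c • deriv (deriv l) := by
      rw [deriv_fun_smul' c dl, deriv_fun_smul' c ddl]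
    have hT2 : deriv (deriv (c • T)) = c • deriv (deriv T) := by
      rw [deriv_fun_smul' c dT, deriv_fun_smul' c ddT]
    have hT3 : deriv (deriv (deriv (c • T))) = c • deriv (deriv (deriv T)) := by
      rw [hT2, deriv_fun_smul' c dddT]
    refine ⟨hT.const_smul c, hl.const_smul c, hσ.const_smul c, ?_, ?_, ?_, ?_⟩
    · intro t
      simp only [Prod.smul_mk, Pi.smul_apply, smul_eq_mul]
      rw [mul_comm c (l t), ← mul_assoc, e₁ t, zero_mul]
    · intro t
      simp only [Prod.smul_mk]
      rw [hl2]
      simp only [Pi.smul_apply, smul_eq_mul, e₂ t]; ring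
    · intro t
      simp only [Prod.smul_mk]
      rw [hT2, deriv_fun_smul' c dσ]
      simp only [Pi.smul_apply, smul_eq_mul, e₃ t]; ring
    · intro t
      simp only [Prod.smul_mk]
      rw [hT3, deriv_fun_smul' c dT]
      simp only [Pi.smul_apply, smul_eq_mul, e₄ t]; ring

/-! Since `C ≠ 0`, `l` vanishes. Writing `8D = -ε²`, the derivative `u = T′` solves the harmonic
oscillator `u″ = -ε² u`, whose energy `(u′)² + ε² u²` is conserved; so `u` is the sinusoid fixed by
its initial data, `T` is an antiderivative of it, and `σ′ = (θ²/4) T″` says that `σ - (θ²/4) T′` is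
constant. -/

lemma mem_Sol {C D θ : ℝ} {T l σ : ℝ → ℝ} :
    (T, l, σ) ∈ Sol C D θ ↔ ContDiff ℝ (⊤ : ℕ∞) T ∧ ContDiff ℝ (⊤ : ℕ∞) l ∧
      ContDiff ℝ (⊤ : ℕ∞) σ ∧ (∀ t, C * l t = 0) ∧ (∀ t, deriv (deriv l) t = 2 * D * l t) ∧
      (∀ t, deriv σ t = θ ^ 2 / 4 * deriv (deriv T) t) ∧
      (∀ t, deriv (deriv (deriv T)) t = 8 * D * deriv T t) :=
  Iff.rfl

noncomputable def sinusoid (ε a b : ℝ) (t : ℝ) : ℝ :=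
  a * cos (ε * t) + b * sin (ε * t)

lemma hasDerivAt_sinusoid (ε a b t : ℝ) :
    HasDerivAt (sinusoid ε a b) (sinusoid ε (ε * b) (-(ε * a)) t) t := by
  have hlin := (hasDerivAt_id t).const_mul ε
  refine (((hasDerivAt_cos (ε * t)).comp t hlin).const_mul a |>.add
    (((hasDerivAt_sin (ε * t)).comp t hlin).const_mul b)).congr_deriv ?_
  simp only [sinusoid]
  ring

lemma deriv_sinusoid (ε a b : ℝ) :
    deriv (sinusoid ε a b) = sinusoid ε (ε * b) (-(ε * a)) :=
  funext fun t => (hasDerivAt_sinusoid ε a b t).deriv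

lemma contDiff_sinusoid (ε a b : ℝ) {n : WithTop ℕ∞} : ContDiff ℝ n (sinusoid ε a b) := by
  unfold sinusoid
  fun_prop

lemma differentiable_sinusoid (ε a b : ℝ) : Differentiable ℝ (sinusoid ε a b) :=
  (contDiff_sinusoid ε a b (n := 1)).differentiable one_ne_zero

lemma deriv_sinusoid_div {ε : ℝ} (hε : ε ≠ 0) (a b : ℝ) :
    deriv (sinusoid ε (-b / ε) (a / ε)) = sinusoid ε a b := by
  rw [deriv_sinusoid]
  congr 1 <;> field_simp

lemma exists_eq_add_of_deriv_eq {f g : ℝ → ℝ} (hf : Differentiable ℝ f)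
    (hg : Differentiable ℝ g) (h : deriv f = deriv g) : ∃ c, ∀ t, f t = g t + c := by
  obtain ⟨c, hc⟩ := isOpen_univ.exists_eq_add_of_deriv_eq isPreconnected_univ
    hf.differentiableOn hg.differentiableOn fun t _ => congrFun h t
  exact ⟨c, fun t => hc (Set.mem_univ t)⟩

/-- Energy argument: `(g')² + k g²` is constant along solutions of `g'' = -k g`. -/
lemma eq_zero_of_deriv_deriv_eq_neg_mul {g : ℝ → ℝ} {k : ℝ} (hk : 0 ≤ k)
    (hg : Differentiable ℝ g) (hg' : Differentiable ℝ (deriv g))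
    (h : ∀ t, deriv (deriv g) t = -k * g t) (h0 : g 0 = 0) (h0' : deriv g 0 = 0) :
    g = 0 := by
  set E : ℝ → ℝ := fun t => deriv g t ^ 2 + k * g t ^ 2
  have hE : ∀ t, HasDerivAt E 0 t := fun t => by
    refine (((hg' t).hasDerivAt.pow 2).add
      (((hg t).hasDerivAt.pow 2).const_mul k)).congr_deriv ?_
    rw [h t]
    ring
  have hE0 : ∀ t, E t = 0 := fun t => by
    rw [is_const_of_deriv_eq_zero (fun s => (hE s).differentiableAt) (fun s => (hE s).deriv) t 0]
    simp [E, h0, h0']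
  have hg'0 : ∀ t, deriv g t = 0 := fun t => by
    have : deriv g t ^ 2 = 0 := by
      nlinarith [hE0 t, sq_nonneg (deriv g t), mul_nonneg hk (sq_nonneg (g t))]
    exact pow_eq_zero_iff two_ne_zero |>.mp this
  funext t
  rw [is_const_of_deriv_eq_zero hg hg'0 t 0, h0, Pi.zero_apply]

lemma eq_sinusoid_of_deriv_deriv_eq {f : ℝ → ℝ} {ε : ℝ} (hε : ε ≠ 0)
    (hf : Differentiable ℝ f) (hf' : Differentiable ℝ (deriv f))
    (h : ∀ t, deriv (deriv f) t = -ε ^ 2 * f t) :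
    f = sinusoid ε (f 0) (deriv f 0 / ε) := by
  set u := sinusoid ε (f 0) (deriv f 0 / ε)
  have hu : Differentiable ℝ u := differentiable_sinusoid ε _ _
  have hu' : Differentiable ℝ (deriv u) := by
    rw [deriv_sinusoid]
    exact differentiable_sinusoid ε _ _
  have hdiff : deriv (f - u) = deriv f - deriv u :=
    funext fun t => deriv_sub (hf t) (hu t)
  have hdiff' : deriv (deriv (f - u)) = deriv (deriv f) - deriv (deriv u) := by
    rw [hdiff]
    exact funext fun t => deriv_sub (hf' t) (hu' t)
  refine sub_eq_zero.mp <| eq_zero_of_deriv_deriv_eq_neg_mul (sq_nonneg ε) (hf.sub hu)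
    (hdiff ▸ hf'.sub hu') (fun t => ?_) ?_ ?_
  · simp only [hdiff', Pi.sub_apply, h t, u, deriv_sinusoid, sinusoid]
    ring
  · simp [u, sinusoid]
  · simp only [hdiff, Pi.sub_apply, u, deriv_sinusoid, sinusoid]
    field_simp
    simp

lemma exists_sinusoid_of_mem_Sol {C D θ ε : ℝ} {T l σ : ℝ → ℝ} (hC : C ≠ 0) (hε : ε ≠ 0)
    (hD : 8 * D = -ε ^ 2) (h : (T, l, σ) ∈ Sol C D θ) :
    l = 0 ∧ ∃ C₁ C₂ C₃ C₄ : ℝ, (∀ t, T t = sinusoid ε (-C₂ / ε) (C₁ / ε) t + C₃) ∧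
      ∀ t, σ t = θ ^ 2 / 4 * sinusoid ε C₁ C₂ t + C₄ := by
  obtain ⟨hT, -, hσ, hCl, -, hσT, hT3⟩ := mem_Sol.mp h
  have hT' := smooth_deriv' hT
  obtain ⟨C₁, C₂, hu⟩ : ∃ C₁ C₂, deriv T = sinusoid ε C₁ C₂ :=
    ⟨_, _, eq_sinusoid_of_deriv_deriv_eq hε (hT'.differentiable (by simp))
      ((smooth_deriv' hT').differentiable (by simp)) fun t => by rw [hT3 t, hD]⟩
  obtain ⟨C₃, hC₃⟩ := exists_eq_add_of_deriv_eq (hT.differentiable (by simp))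
    (differentiable_sinusoid ε _ _)
    (hu.trans (deriv_sinusoid_div hε _ _).symm)
  obtain ⟨C₄, hC₄⟩ := exists_eq_add_of_deriv_eq (g := (θ ^ 2 / 4) • deriv T)
    (hσ.differentiable (by simp)) ((hT'.const_smul (θ ^ 2 / 4)).differentiable (by simp))
    (by rw [deriv_fun_smul' _ (hT'.differentiable (by simp))]; exact funext hσT)
  refine ⟨funext fun t => (mul_eq_zero.mp (hCl t)).resolve_left hC, C₁, C₂, C₃, C₄, hC₃,
    fun t => ?_⟩
  rw [hC₄ t, Pi.smul_apply, hu, smul_eq_mul]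

lemma sinusoid_mem_Sol {C D θ ε : ℝ} (hε : ε ≠ 0) (hD : 8 * D = -ε ^ 2) (C₁ C₂ C₃ C₄ : ℝ) :
    (fun t => sinusoid ε (-C₂ / ε) (C₁ / ε) t + C₃, 0,
      fun t => θ ^ 2 / 4 * sinusoid ε C₁ C₂ t + C₄) ∈ Sol C D θ := by
  have hT' : deriv (fun t => sinusoid ε (-C₂ / ε) (C₁ / ε) t + C₃) = sinusoid ε C₁ C₂ := by
    rw [deriv_add_const', deriv_sinusoid_div hε]
  refine mem_Sol.mpr ⟨(contDiff_sinusoid ε _ _).add contDiff_const, contDiff_const,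
    (contDiff_const.mul (contDiff_sinusoid ε _ _)).add contDiff_const, by simp, by simp,
    fun t => ?_, fun t => ?_⟩
  · rw [deriv_add_const', deriv_const_mul_field', hT', deriv_sinusoid]
  · rw [hT', deriv_sinusoid, deriv_sinusoid, hD]
    simp only [sinusoid]
    ring

theorem mem_Sol_iff_of_neg_general (C D θ ε : ℝ) (hC : C ≠ 0) (hD : D < 0)
    (hε : ε = Real.sqrt (-(8 * D))) (T l σ : ℝ → ℝ) :
    (T, l, σ) ∈ Sol C D θ ↔
      l = 0 ∧ ∃ C₁ C₂ C₃ C₄ : ℝ,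
        (∀ t, T t = C₁ / ε * Real.sin (ε * t) - C₂ / ε * Real.cos (ε * t) + C₃) ∧
        (∀ t, σ t = θ ^ 2 * C₁ / 4 * Real.cos (ε * t)
          + θ ^ 2 * C₂ / 4 * Real.sin (ε * t) + C₄) := by
  have hε0 : ε ≠ 0 := by
    rw [hε]
    exact (Real.sqrt_pos.mpr (by linarith)).ne'
  have h8D : 8 * D = -ε ^ 2 := by
    rw [hε, Real.sq_sqrt (by linarith)]
    ring
  constructor
  · intro h
    obtain ⟨hl, C₁, C₂, C₃, C₄, hT, hσ⟩ := exists_sinusoid_of_mem_Sol hC hε0 h8D h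
    refine ⟨hl, C₁, C₂, C₃, C₄, fun t => ?_, fun t => ?_⟩
    · rw [hT t, sinusoid]
      ring
    · rw [hσ t, sinusoid]
      ring
  · rintro ⟨rfl, C₁, C₂, C₃, C₄, hT, hσ⟩
    obtain rfl : T = fun t => sinusoid ε (-C₂ / ε) (C₁ / ε) t + C₃ := funext fun t => by
      rw [hT t, sinusoid]
      ring
    obtain rfl : σ = fun t => θ ^ 2 / 4 * sinusoid ε C₁ C₂ t + C₄ := funext fun t => by
      rw [hσ t, sinusoid]
      ring
    exact sinusoid_mem_Sol hε0 h8D C₁ C₂ C₃ C₄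

/-- For `C ≠ 0` and `D < 0`, with `ε = √(−8D)`, a triple `(T, l, σ)` of smooth functions
belongs to `Sol C D θ` iff `l = 0` and `T`, `σ` have the stated trigonometric form. -/
theorem mem_Sol_iff_of_neg (C D θ ε : ℝ) (hC : C ≠ 0) (hD : D < 0)
    (hε : ε = Real.sqrt (-(8 * D))) (T l σ : ℝ → ℝ)
    (hT : ContDiff ℝ (⊤ : ℕ∞) T) (hl : ContDiff ℝ (⊤ : ℕ∞) l)
    (hσ : ContDiff ℝ (⊤ : ℕ∞) σ) :
    (T, l, σ) ∈ Sol C D θ ↔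
      l = 0 ∧ ∃ C₁ C₂ C₃ C₄ : ℝ,
        (∀ t, T t = C₁ / ε * Real.sin (ε * t) - C₂ / ε * Real.cos (ε * t) + C₃) ∧
        (∀ t, σ t = θ ^ 2 * C₁ / 4 * Real.cos (ε * t)
          + θ ^ 2 * C₂ / 4 * Real.sin (ε * t) + C₄) :=
  mem_Sol_iff_of_neg_general C D θ ε hC hD hε T l σ
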